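/- Let (Z_{ij} : i ≥ 1, 1 ≤ j ≤ r_i) be independent ℤ₊-valued random variables such that for each i the variables Z_{i1},…,Z_{i r_i} are i.i.d.; set Z_i := ∑_{j=1}^{r_i} Z_{ij}, θ_i := i·E[Z_i] ∈ (0,∞), and T_{a,n} := ∑_{i=a+1}^n i·Z_i. Let ε_{ik} := (i·r_i/θ_i)·P[Z_{i1}=k] − 1{k=1} for k ≥ 1, μ_i := ∑_{k≥1} k·sup_{j≥i} |ε_{jk}| (assumed finite), θ > 0, δ(m,θ) := sup_{j≥0} |θ − (1/m)∑_{i=1}^m θ_{jm+i}|, and θ* := max{1, θ, sup_i θ_i}. Then for all integers a, j, n, m with 0 ≤ a ≤ j < n, 0 < 2m ≤ j, and μ_{j+1} ≤ 1/2, one has P[T_{a,n} ≤ j] ≤ { 2·e^{1+θ*}·((j+1)/(n+1))^{θ − δ(m,θ)} }^{1−μ_{j+1}}. -/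

import Mathlib

open MeasureTheory ProbabilityTheory Finset

/-!
If `T_{a,n} ≤ j` then `Z_i = 0` for all `j < i ≤ n`, so by independence the probability is at most
`∏_{j<i≤n} P[Z_{i1} = 0]^{r_i} ≤ exp (-∑_{j<i≤n} r_i P[Z_{i1} = 1])`. Since `|ε_{i1}| ≤ μ_{j+1}`,
`r_i P[Z_{i1} = 1] ≥ (1 - μ_{j+1}) θ_i / i`. Grouping `i` into blocks of length `m`, on each of
which the `θ_i` average at least `θ - δ(m,θ)`, bounds `∑_{j<i≤n} θ_i / i` below by
`(θ - δ(m,θ)) log ((n+1)/(j+1)) - θ*`.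
-/

lemma log_div_le_sum_Ico_inv {b q : ℕ} (hbq : b ≤ q) :
    Real.log ((q + 1) / (b + 1)) ≤ ∑ k ∈ Ico b q, 1 / ((k : ℝ) + 1) := by
  induction q, hbq using Nat.le_induction with
  | base => simp
  | succ q hbq ih =>
    have hq : (0 : ℝ) < q + 1 := by positivity
    have hstep : Real.log ((q + 1 + 1) / (q + 1)) ≤ 1 / ((q : ℝ) + 1) := by
      refine (Real.log_le_sub_one_of_pos (by positivity)).trans_eq ?_
      field_simp
      ring
    rw [sum_Ico_succ_top hbq, Nat.cast_succ,
      ← div_mul_div_cancel₀ (b := ((q : ℝ) + 1)) hq.ne',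
      Real.log_mul (by positivity) (by positivity)]
    linarith

lemma sum_Ioc_mul_eq_sum_Ico_sum_Ioc {M : Type*} [AddCommMonoid M] (f : ℕ → M) (m : ℕ)
    {b q : ℕ} (hbq : b ≤ q) :
    ∑ i ∈ Ioc (b * m) (q * m), f i = ∑ k ∈ Ico b q, ∑ i ∈ Ioc (k * m) ((k + 1) * m), f i := by
  induction q, hbq using Nat.le_induction with
  | base => simp
  | succ q hbq ih =>
    rw [sum_Ico_succ_top hbq, ← ih,
      sum_Ioc_consecutive _ (Nat.mul_le_mul_right m hbq) (Nat.mul_le_mul_right m q.le_succ)]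

lemma sum_Icc_one_add_eq_sum_Ioc {M : Type*} [AddCommMonoid M] (f : ℕ → M) (a m : ℕ) :
    ∑ i ∈ Icc 1 m, f (a + i) = ∑ i ∈ Ioc a (a + m), f i := by
  rw [← Icc_add_one_left_eq_Ioc, ← map_add_left_Icc, sum_map]
  rfl

lemma div_succ_le_sum_Ioc_div {f : ℕ → ℝ} (hf : ∀ i, 1 ≤ i → 0 ≤ f i) {m : ℕ} (hm : 0 < m)
    {t : ℝ} {k : ℕ} (hblock : m * t ≤ ∑ i ∈ Ioc (k * m) ((k + 1) * m), f i) :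
    t / (k + 1) ≤ ∑ i ∈ Ioc (k * m) ((k + 1) * m), f i / i := by
  have hkm : (0 : ℝ) < (k + 1) * m := by positivity
  calc t / (k + 1) = m * t / ((k + 1) * m) := by field_simp
    _ ≤ (∑ i ∈ Ioc (k * m) ((k + 1) * m), f i) / ((k + 1) * m) := by gcongr
    _ = ∑ i ∈ Ioc (k * m) ((k + 1) * m), f i / ((k + 1) * m) := sum_div _ _ _
    _ ≤ ∑ i ∈ Ioc (k * m) ((k + 1) * m), f i / i := by
      refine sum_le_sum fun i hi => ?_
      obtain ⟨hlo, hhi⟩ := mem_Ioc.mp hi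
      have hi' : (i : ℝ) ≤ (k + 1) * m := by exact_mod_cast hhi
      exact div_le_div_of_nonneg_left (hf i (by omega)) (by exact_mod_cast (by omega : 0 < i)) hi'

/-- Sum over the blocks `(k m, (k+1) m]` with `⌈j/m⌉ ≤ k < ⌊n/m⌋`, each contributing at least
`t / (k+1)`; the two incomplete ends cost at most the factor `2`. -/
lemma mul_sub_log_two_le_sum_Ioc_div {f : ℕ → ℝ} (hf : ∀ i, 1 ≤ i → 0 ≤ f i) {m j n : ℕ}
    (hm : 0 < m) (h2m : 2 * m ≤ j) {t : ℝ} (ht : 0 ≤ t)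
    (hblock : ∀ k, m * t ≤ ∑ i ∈ Ioc (k * m) ((k + 1) * m), f i) :
    t * (Real.log ((n + 1) / (j + 1)) - Real.log 2) ≤ ∑ i ∈ Ioc j n, f i / i := by
  obtain ⟨b, hb⟩ : ∃ b, b = (j + m - 1) / m := ⟨_, rfl⟩
  obtain ⟨q, hq⟩ : ∃ q, q = max (n / m) b := ⟨_, rfl⟩
  have hbq : b ≤ q := hq ▸ le_max_right _ _
  have hjb : j ≤ b * m := by
    have := Nat.lt_div_mul_add (a := j + m - 1) hm
    rw [← hb] at this; omega
  have hbj : b * m + m ≤ 2 * (j + 1) := by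
    have := Nat.div_mul_le_self (j + m - 1) m
    rw [← hb] at this; omega
  have hnq : n + 1 ≤ q * m + m := by
    have := Nat.lt_div_mul_add (a := n) hm
    have := Nat.mul_le_mul_right m (hq ▸ le_max_left (n / m) b : n / m ≤ q); omega
  have hqn : q * m ≤ n ∨ q = b := by
    rcases le_total (n / m) b with h | h
    · exact .inr (hq.trans (max_eq_right h))
    · exact .inl (hq ▸ (max_eq_left h).symm ▸ Nat.div_mul_le_self n m)
  have hratio : (n + 1 : ℝ) / (j + 1) / 2 ≤ (q + 1) / (b + 1) := by
    have hm' : (0 : ℝ) < m := by exact_mod_cast hm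
    have h1 : (n + 1 : ℝ) ≤ (q + 1) * m := by push_cast [add_one_mul]; exact_mod_cast hnq
    have h2 : ((b : ℝ) + 1) * m ≤ 2 * (j + 1) := by push_cast [add_one_mul]; exact_mod_cast hbj
    rw [div_div, div_le_div_iff₀ (by positivity) (by positivity)]
    refine le_of_mul_le_mul_right ?_ hm'
    nlinarith
  calc t * (Real.log ((n + 1) / (j + 1)) - Real.log 2)
      = t * Real.log ((n + 1) / (j + 1) / 2) := by
        rw [Real.log_div (by positivity) two_ne_zero]
    _ ≤ t * Real.log ((q + 1) / (b + 1)) := by gcongr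
    _ ≤ t * ∑ k ∈ Ico b q, 1 / ((k : ℝ) + 1) := by gcongr; exact log_div_le_sum_Ico_inv hbq
    _ ≤ ∑ k ∈ Ico b q, ∑ i ∈ Ioc (k * m) ((k + 1) * m), f i / i := by
      rw [mul_sum]
      refine sum_le_sum fun k _ => ?_
      rw [← div_eq_mul_one_div]
      exact div_succ_le_sum_Ioc_div hf hm (hblock k)
    _ = ∑ i ∈ Ioc (b * m) (q * m), f i / i := (sum_Ioc_mul_eq_sum_Ico_sum_Ioc _ m hbq).symm
    _ ≤ ∑ i ∈ Ioc j n, f i / i := by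
      refine sum_le_sum_of_subset_of_nonneg (fun i hi => ?_) fun i hi _ => ?_
      · obtain ⟨hlo, hhi⟩ := mem_Ioc.mp hi
        rcases hqn with h | rfl <;> exact mem_Ioc.mpr ⟨by omega, by omega⟩
      · exact div_nonneg (hf i (by have := (mem_Ioc.mp hi).1; omega)) i.cast_nonneg

lemma sub_iSup_abs_sub_le {g : ℕ → ℝ} {θ : ℝ} (hg : BddAbove (Set.range fun k => |θ - g k|))
    (k : ℕ) : θ - ⨆ k, |θ - g k| ≤ g k := by
  linarith [le_ciSup hg k, le_abs_self (θ - g k)]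

lemma abs_mean_Icc_le {f : ℕ → ℝ} {M : ℝ} (hf : ∀ i, 1 ≤ i → |f i| ≤ M) (m a : ℕ) :
    |1 / (m : ℝ) * ∑ i ∈ Icc 1 m, f (a + i)| ≤ M := by
  rcases m.eq_zero_or_pos with rfl | hm
  · simp only [CharP.cast_eq_zero, div_zero, zero_mul, abs_zero]
    exact (abs_nonneg _).trans (hf 1 le_rfl)
  have hsum : ∑ i ∈ Icc 1 m, |f (a + i)| ≤ m * M := by
    simpa using sum_le_card_nsmul (Icc 1 m) (fun i => |f (a + i)|) M
      fun i hi => hf (a + i) (by have := (mem_Icc.mp hi).1; omega)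
  rw [abs_mul, abs_of_pos (by positivity)]
  calc 1 / (m : ℝ) * |∑ i ∈ Icc 1 m, f (a + i)| ≤ 1 / m * (m * M) := by
        gcongr; exact (abs_sum_le_sum_abs _ _).trans hsum
    _ = M := by field_simp

lemma mul_sub_iSup_le_sum_Ioc {f : ℕ → ℝ} {M : ℝ} (hf : ∀ i, 1 ≤ i → |f i| ≤ M) {m : ℕ}
    (hm : 0 < m) (θ : ℝ) (k : ℕ) :
    m * (θ - ⨆ b : ℕ, |θ - (1 / (m : ℝ)) * ∑ i ∈ Icc 1 m, f (b * m + i)|) ≤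
      ∑ i ∈ Ioc (k * m) ((k + 1) * m), f i := by
  have hbdd :
      BddAbove (Set.range fun b : ℕ => |θ - (1 / (m : ℝ)) * ∑ i ∈ Icc 1 m, f (b * m + i)|) :=
    ⟨|θ| + M, Set.forall_mem_range.mpr fun b =>
      (abs_sub _ _).trans (by gcongr; exact abs_mean_Icc_le hf m _)⟩
  have hm' : (0 : ℝ) < m := by exact_mod_cast hm
  calc m * (θ - ⨆ b : ℕ, |θ - (1 / (m : ℝ)) * ∑ i ∈ Icc 1 m, f (b * m + i)|)
      ≤ m * ((1 / (m : ℝ)) * ∑ i ∈ Icc 1 m, f (k * m + i)) := by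
        gcongr; exact sub_iSup_abs_sub_le hbdd k
    _ = ∑ i ∈ Ioc (k * m) ((k + 1) * m), f i := by
        rw [sum_Icc_one_add_eq_sum_Ioc, add_one_mul]; field_simp

lemma neg_sum_Ioc_div_le {f : ℕ → ℝ} (hf : ∀ i, 1 ≤ i → 0 ≤ f i) {m j n : ℕ}
    (hm : 0 < m) (h2m : 2 * m ≤ j) (hjn : j ≤ n) {t Θ : ℝ} (htΘ : t ≤ Θ) (hΘ : 0 ≤ Θ)
    (hblock : ∀ k, m * t ≤ ∑ i ∈ Ioc (k * m) ((k + 1) * m), f i) :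
    -∑ i ∈ Ioc j n, f i / i ≤ Θ + t * Real.log ((j + 1) / (n + 1)) := by
  have hlog : Real.log ((j + 1 : ℝ) / (n + 1)) = -Real.log ((n + 1) / (j + 1)) := by
    rw [← Real.log_inv, inv_div]
  have hL : 0 ≤ Real.log ((n + 1 : ℝ) / (j + 1)) :=
    Real.log_nonneg ((one_le_div (by positivity)).mpr (by exact_mod_cast Nat.succ_le_succ hjn))
  rw [hlog]
  rcases le_or_gt t 0 with ht | ht
  · have hS : 0 ≤ ∑ i ∈ Ioc j n, f i / i :=
      sum_nonneg fun i hi => div_nonneg (hf i (by have := (mem_Ioc.mp hi).1; omega)) i.cast_nonneg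
    nlinarith
  · have hS := mul_sub_log_two_le_sum_Ioc_div (n := n) hf hm h2m ht.le hblock
    have hlog2 : Real.log 2 ≤ 1 := by
      linarith [Real.log_le_sub_one_of_pos (by norm_num : (0 : ℝ) < 2)]
    nlinarith

lemma exp_neg_mul_le_rpow {S Θ t x c : ℝ} (hx : 0 < x) (hc : 0 ≤ c)
    (hS : -S ≤ Θ + t * Real.log x) :
    Real.exp (-(c * S)) ≤ (2 * Real.exp (1 + Θ) * x ^ t) ^ c := by
  rw [show -(c * S) = -S * c by ring, Real.exp_mul]
  refine Real.rpow_le_rpow (Real.exp_pos _).le ?_ hc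
  calc Real.exp (-S) ≤ Real.exp (Θ + t * Real.log x) := Real.exp_le_exp.mpr hS
    _ = Real.exp Θ * x ^ t := by rw [Real.exp_add, mul_comm t, Real.rpow_def_of_pos hx]
    _ ≤ 2 * Real.exp (1 + Θ) * x ^ t := by
      gcongr
      calc Real.exp Θ ≤ Real.exp (1 + Θ) := Real.exp_le_exp.mpr (by linarith)
        _ ≤ 2 * Real.exp (1 + Θ) := by linarith [Real.exp_pos (1 + Θ)]

lemma eq_zero_of_sum_mul_le {s : Finset ℕ} {x : ℕ → ℕ} {j i : ℕ}
    (h : ∑ k ∈ s, k * x k ≤ j) (hi : i ∈ s) (hji : j < i) : x i = 0 := by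
  by_contra hx
  have := (single_le_sum (fun k _ => Nat.zero_le (k * x k)) hi).trans h
  nlinarith [Nat.pos_of_ne_zero hx]

section Independence

variable {Ω : Type*} [MeasurableSpace Ω] {P : Measure Ω}

lemma measureReal_eq_zero_pow_le_exp [IsProbabilityMeasure P] {X : Ω → ℕ} (hX : Measurable X)
    (r : ℕ) :
    P.real {ω | X ω = 0} ^ r ≤ Real.exp (-(r * P.real {ω | X ω = 1})) := by
  have hp : P.real {ω | X ω = 0} ≤ 1 - P.real {ω | X ω = 1} := by
    show P.real (X ⁻¹' {0}) ≤ 1 - P.real (X ⁻¹' {1})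
    rw [← probReal_compl_eq_one_sub (hX (measurableSet_singleton 1))]
    exact measureReal_mono fun ω (h : X ω = 0) (h' : X ω = 1) => by omega
  rw [neg_mul_eq_mul_neg, Real.exp_nat_mul]
  gcongr
  exact hp.trans (Real.one_sub_le_exp_neg _)

variable {r : ℕ → ℕ} {Z : ℕ → ℕ → Ω → ℕ}

lemma measure_forall_eq_zero_eq_prod_pow (hZm : ∀ i j, Measurable (Z i j))
    (hind : iIndepFun (fun p : (i : ℕ) × Fin (r i) => Z p.1 p.2.1) P)
    (hiid : ∀ i, ∀ j < r i, Measure.map (Z i j) P = Measure.map (Z i 0) P) (s : Finset ℕ) :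
    P {ω | ∀ i ∈ s, ∀ k < r i, Z i k ω = 0} = ∏ i ∈ s, P {ω | Z i 0 ω = 0} ^ r i := by
  have hset : {ω | ∀ i ∈ s, ∀ k < r i, Z i k ω = 0} =
      ⋂ p ∈ s.sigma fun _ => univ, (fun p : (i : ℕ) × Fin (r i) => Z p.1 p.2.1) p ⁻¹' {0} := by
    ext ω
    simp only [Set.mem_ofPred_eq, Set.mem_iInter, mem_sigma, mem_univ, and_true, Set.mem_preimage,
      Set.mem_singleton_iff]
    exact ⟨fun h p hp => h p.1 hp p.2 p.2.2, fun h i hi k hk => h ⟨i, k, hk⟩ hi⟩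
  rw [hset, hind.measure_inter_preimage_eq_mul _ fun _ _ => measurableSet_singleton 0, prod_sigma]
  refine prod_congr rfl fun i _ => ?_
  have hk (k : Fin (r i)) : P (Z i k ⁻¹' {0}) = P (Z i 0 ⁻¹' {0}) := by
    simpa [Measure.map_apply (hZm _ _) (measurableSet_singleton 0)] using
      congrArg (· {0}) (hiid i k k.2)
  simp only [hk, prod_const, card_univ, Fintype.card_fin]
  rfl

lemma measureReal_sum_mul_le_le_exp [IsProbabilityMeasure P] (hZm : ∀ i j, Measurable (Z i j))
    (hind : iIndepFun (fun p : (i : ℕ) × Fin (r i) => Z p.1 p.2.1) P)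
    (hiid : ∀ i, ∀ j < r i, Measure.map (Z i j) P = Measure.map (Z i 0) P)
    {Zs : ℕ → Ω → ℕ} (hZs : ∀ i ω, Zs i ω = ∑ j ∈ range (r i), Z i j ω) {a j n : ℕ}
    (haj : a ≤ j) {w : ℕ → ℝ} (hw : ∀ i ∈ Ioc j n, w i ≤ r i * P.real {ω | Z i 0 ω = 1}) :
    P.real {ω | ∑ i ∈ Icc (a + 1) n, i * Zs i ω ≤ j} ≤ Real.exp (-∑ i ∈ Ioc j n, w i) := by
  have hsub : {ω | ∑ i ∈ Icc (a + 1) n, i * Zs i ω ≤ j} ⊆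
      {ω | ∀ i ∈ Ioc j n, ∀ k < r i, Z i k ω = 0} := fun ω hω i hi k hk => by
    obtain ⟨hji, hin⟩ := mem_Ioc.mp hi
    have hZi := eq_zero_of_sum_mul_le hω (mem_Icc.mpr ⟨by omega, hin⟩) hji
    rw [hZs, sum_eq_zero_iff] at hZi
    exact hZi k (mem_range.mpr hk)
  calc P.real {ω | ∑ i ∈ Icc (a + 1) n, i * Zs i ω ≤ j}
      ≤ P.real {ω | ∀ i ∈ Ioc j n, ∀ k < r i, Z i k ω = 0} := measureReal_mono hsub
    _ = ∏ i ∈ Ioc j n, P.real {ω | Z i 0 ω = 0} ^ r i := by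
      simp only [measureReal_def, measure_forall_eq_zero_eq_prod_pow hZm hind hiid,
        ENNReal.toReal_prod, ENNReal.toReal_pow]
    _ ≤ ∏ i ∈ Ioc j n, Real.exp (-w i) := by
      refine prod_le_prod (fun _ _ => by positivity) fun i hi => ?_
      exact (measureReal_eq_zero_pow_le_exp (hZm i 0) _).trans
        (Real.exp_le_exp.mpr (neg_le_neg (hw i hi)))
    _ = Real.exp (-∑ i ∈ Ioc j n, w i) := by rw [← Real.exp_sum, sum_neg_distrib]

end Independence

lemma abs_le_tsum_mul_iSup {ε : ℕ → ℕ → ℝ} {i₀ : ℕ}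
    (hbdd : ∀ k, BddAbove (Set.range fun j => |ε (i₀ + j) k|))
    (hsum : Summable fun k : ℕ => (k : ℝ) * ⨆ j, |ε (i₀ + j) k|) {i : ℕ} (hi : i₀ ≤ i) (k : ℕ) :
    k * |ε i k| ≤ ∑' k : ℕ, (k : ℝ) * ⨆ j, |ε (i₀ + j) k| := by
  have hsup (k : ℕ) : 0 ≤ ⨆ j, |ε (i₀ + j) k| := Real.iSup_nonneg fun _ => abs_nonneg _
  refine le_trans ?_ (hsum.le_tsum k fun k _ => mul_nonneg k.cast_nonneg (hsup k))
  gcongr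
  simpa [Nat.add_sub_cancel' hi] using le_ciSup (hbdd k) (i - i₀)

lemma one_sub_mul_div_le_of_abs_sub_le {i r q θ μ₀ : ℝ} (hi : 0 < i) (hθ : 0 < θ)
    (h : |i * r / θ * q - 1| ≤ μ₀) : (1 - μ₀) * (θ / i) ≤ r * q := by
  calc (1 - μ₀) * (θ / i) ≤ (i * r / θ * q) * (θ / i) := by
        gcongr; linarith [neg_abs_le (i * r / θ * q - 1)]
    _ = r * q := by field_simp

theorem stmt10_general {Ω : Type*} [MeasurableSpace Ω] (P : Measure Ω) [IsProbabilityMeasure P]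
    (r : ℕ → ℕ)
    (Z : ℕ → ℕ → Ω → ℕ) (hZm : ∀ i j, Measurable (Z i j))
    (hind : iIndepFun
      (fun p : (i : ℕ) × Fin (r i) => Z p.1 p.2.1) P)
    (hiid : ∀ i, ∀ j < r i, Measure.map (Z i j) P = Measure.map (Z i 0) P)
    (Zs : ℕ → Ω → ℕ) (hZs : ∀ i ω, Zs i ω = ∑ j ∈ range (r i), Z i j ω)
    (θi : ℕ → ℝ)
    (hθipos : ∀ i, 1 ≤ i → 0 < θi i)
    (hθibdd : BddAbove (Set.range fun i => θi (i + 1)))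
    (ε : ℕ → ℕ → ℝ)
    (hε : ∀ i k, ε i k =
      ((i : ℝ) * r i / θi i) * (P {ω | Z i 0 ω = k}).toReal - if k = 1 then 1 else 0)
    (hεbdd : ∀ i k, BddAbove (Set.range fun j => |ε (i + j) k|))
    (μ : ℕ → ℝ) (hμ : ∀ i, μ i = ∑' k : ℕ, (k : ℝ) * ⨆ j : ℕ, |ε (i + j) k|)
    (hμsum : ∀ i, Summable fun k : ℕ => (k : ℝ) * ⨆ j : ℕ, |ε (i + j) k|)
    (θ : ℝ)
    (a j n m : ℕ) (haj : a ≤ j) (hjn : j < n) (hm : 0 < m) (h2m : 2 * m ≤ j)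
    (hμj : μ (j + 1) ≤ 1 / 2) :
    (P {ω | ∑ i ∈ Icc (a + 1) n, i * Zs i ω ≤ j}).toReal ≤
      (2 * Real.exp (1 + max 1 (max θ (⨆ i, θi (i + 1)))) *
          (((j : ℝ) + 1) / ((n : ℝ) + 1)) ^
            (θ - ⨆ jb : ℕ, |θ - (1 / (m : ℝ)) * ∑ i ∈ Icc 1 m, θi (jb * m + i)|)) ^
        (1 - μ (j + 1)) := by
  set M := ⨆ i, θi (i + 1)
  set δ := ⨆ jb : ℕ, |θ - (1 / (m : ℝ)) * ∑ i ∈ Icc 1 m, θi (jb * m + i)|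
  have hθiM : ∀ i, 1 ≤ i → |θi i| ≤ M := fun i hi => by
    simpa [abs_of_pos (hθipos i hi), Nat.sub_add_cancel hi] using le_ciSup hθibdd (i - 1)
  have hq : ∀ i ∈ Ioc j n, (1 - μ (j + 1)) * (θi i / i) ≤ r i * P.real {ω | Z i 0 ω = 1} :=
    fun i hi => by
      have hji := (mem_Ioc.mp hi).1
      have hε₁ := abs_le_tsum_mul_iSup (hεbdd (j + 1)) (hμsum (j + 1)) hji 1
      rw [Nat.cast_one, one_mul, hε, if_pos rfl, ← hμ] at hε₁
      exact one_sub_mul_div_le_of_abs_sub_le (Nat.cast_pos.mpr (by omega))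
        (hθipos i (by omega)) hε₁
  have hS : -∑ i ∈ Ioc j n, θi i / i ≤
      max 1 (max θ M) + (θ - δ) * Real.log ((j + 1) / (n + 1)) := by
    refine neg_sum_Ioc_div_le (fun i hi => (hθipos i hi).le) hm h2m hjn.le ?_ (by positivity)
      (mul_sub_iSup_le_sum_Ioc hθiM hm θ)
    have hδ : 0 ≤ δ := Real.iSup_nonneg fun _ => abs_nonneg _
    linarith [le_max_left θ M, le_max_right 1 (max θ M)]
  have hprob := measureReal_sum_mul_le_le_exp hZm hind hiid hZs haj hq
  rw [← mul_sum] at hprob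
  exact hprob.trans (exp_neg_mul_le_rpow (by positivity) (by linarith) hS)

/-- Display (3.14): under the quasi-logarithmic setup, for `0 ≤ a ≤ j < n`, `0 < 2m ≤ j` and
`μ_{j+1} ≤ 1/2`,
`P[T_{a,n} ≤ j] ≤ {2 e^{1+θ*} ((j+1)/(n+1))^{θ−δ(m,θ)}}^{1−μ_{j+1}}`. -/
theorem stmt10 {Ω : Type*} [MeasurableSpace Ω] (P : Measure Ω) [IsProbabilityMeasure P]
    (r : ℕ → ℕ) (hr : ∀ i, 1 ≤ r i)
    (Z : ℕ → ℕ → Ω → ℕ) (hZm : ∀ i j, Measurable (Z i j))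
    (hind : iIndepFun
      (fun p : (i : ℕ) × Fin (r i) => Z p.1 p.2.1) P)
    (hiid : ∀ i, ∀ j < r i, Measure.map (Z i j) P = Measure.map (Z i 0) P)
    (hint : ∀ i j, Integrable (fun ω => (Z i j ω : ℝ)) P)
    (Zs : ℕ → Ω → ℕ) (hZs : ∀ i ω, Zs i ω = ∑ j ∈ range (r i), Z i j ω)
    (θi : ℕ → ℝ) (hθi : ∀ i, θi i = i * ∫ ω, (Zs i ω : ℝ) ∂P)
    (hθipos : ∀ i, 1 ≤ i → 0 < θi i)
    (hθibdd : BddAbove (Set.range fun i => θi (i + 1)))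
    (ε : ℕ → ℕ → ℝ)
    (hε : ∀ i k, ε i k =
      ((i : ℝ) * r i / θi i) * (P {ω | Z i 0 ω = k}).toReal - if k = 1 then 1 else 0)
    (hεbdd : ∀ i k, BddAbove (Set.range fun j => |ε (i + j) k|))
    (μ : ℕ → ℝ) (hμ : ∀ i, μ i = ∑' k : ℕ, (k : ℝ) * ⨆ j : ℕ, |ε (i + j) k|)
    (hμsum : ∀ i, Summable fun k : ℕ => (k : ℝ) * ⨆ j : ℕ, |ε (i + j) k|)
    (θ : ℝ) (hθ : 0 < θ)
    (a j n m : ℕ) (haj : a ≤ j) (hjn : j < n) (hm : 0 < m) (h2m : 2 * m ≤ j)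
    (hμj : μ (j + 1) ≤ 1 / 2) :
    (P {ω | ∑ i ∈ Icc (a + 1) n, i * Zs i ω ≤ j}).toReal ≤
      (2 * Real.exp (1 + max 1 (max θ (⨆ i, θi (i + 1)))) *
          (((j : ℝ) + 1) / ((n : ℝ) + 1)) ^
            (θ - ⨆ jb : ℕ, |θ - (1 / (m : ℝ)) * ∑ i ∈ Icc 1 m, θi (jb * m + i)|)) ^
        (1 - μ (j + 1)) :=
  stmt10_general P r Z hZm hind hiid Zs hZs θi hθipos hθibdd ε hε hεbdd μ hμ hμsum θ a j n m haj hjn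
    hm h2m hμj
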